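/- arXiv:2504.16624 — 2 statements merged into one kernel-verified Lean document; each statement's English description precedes it below -/
import Mathlib

section
/- If (σ_N, P) is a counter-example to Ω ⊨ Obs, and Ω' is any distribution of Σ such that no discrepancy δ for (σ_N, P) is contained in any alphabet of Ω', then (σ_N, P) extends to a counter-example to Ω' ⊨ Obs: for every Σ_j ∈ Ω' there exists σ in the positive image of P with proj(σ_N, Σ_j) = proj(σ, Σ_j). -/
open Classical in
/-- Projection of a trace onto a sub-alphabet. -/
noncomputable def proj {A : Type*} (s : Set A) : List A → List A
  | [] => []
  | a :: σ => if a ∈ s then a :: proj s σ else proj s σ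

/-- A distribution of the alphabet `A`: a family of sub-alphabets covering `A`. -/
def AlphDistribution {A : Type*} (Ω : Set (Set A)) : Prop := ⋃₀ Ω = Set.univ

/-- A language agrees with an observation function (`L ⊨ Obs`). -/
def Agrees {A : Type*} (L : Set (List A)) (Obs : List A → Option Bool) : Prop :=
  ∀ σ b, Obs σ = some b → (σ ∈ L ↔ b = true)

/-- `L` is a product language over the distribution `Ω`: it is the parallel
composition of a family of languages over the component alphabets. -/
def ProductLang {A : Type*} (Ω : Set (Set A)) (L : Set (List A)) : Prop :=
  ∃ Ls : Set A → Set (List A),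
    (∀ s ∈ Ω, ∀ σ ∈ Ls s, ∀ a ∈ σ, a ∈ s) ∧
    L = {σ | ∀ s ∈ Ω, proj s σ ∈ Ls s}

/-- `Ω ⊨ Obs`: some product language over `Ω` agrees with `Obs`. -/
def Models {A : Type*} (Ω : Set (Set A)) (Obs : List A → Option Bool) : Prop :=
  ∃ L, ProductLang Ω L ∧ Agrees L Obs

/-- A counter-example to `Ω ⊨ Obs`: a negative observation `σN` together with,
for each component alphabet, a positive observation with matching projection. -/
def IsCED {A : Type*} (Ω : Set (Set A)) (Obs : List A → Option Bool)
    (σN : List A) (P : Set A → List A) : Prop :=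
  Obs σN = some false ∧
  ∀ s ∈ Ω, Obs (P s) = some true ∧ proj s σN = proj s (P s)

/-- The connectivity preorder: `Ω` is less connecting than `Ω'`. -/
def lessConn {A : Type*} (Ω Ω' : Set (Set A)) : Prop :=
  ∀ s ∈ Ω, ∃ t ∈ Ω', s ⊆ t

/-- Multiplicity discrepancies: symbols occurring a different number of times. -/
def MultDisc {A : Type*} [DecidableEq A] (x y : List A) : Set A :=
  {a | x.count a ≠ y.count a}

/-- Order discrepancy: a pair of distinct symbols, each with equal multiplicity in
both traces, whose relative order differs between the two traces. -/
def OrdDisc {A : Type*} [DecidableEq A] (x y : List A) (a b : A) : Prop :=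
  a ≠ b ∧ x.count a = y.count a ∧ x.count b = y.count b ∧
    proj {a, b} x ≠ proj {a, b} y

/-- `δ` is a discrepancy for the counter-example `(σN, P)`: for every component
alphabet it contains a multiplicity discrepancy or an order-discrepancy pair. -/
def IsDisc {A : Type*} [DecidableEq A] (Ω : Set (Set A)) (σN : List A)
    (P : Set A → List A) (δ : Set A) : Prop :=
  ∀ s ∈ Ω, (∃ a ∈ δ, a ∈ MultDisc σN (P s)) ∨
    (∃ a b, a ∈ δ ∧ b ∈ δ ∧ OrdDisc σN (P s) a b)

/-! If for some `s' ∈ Ω'` no `P s` agreed with `σN` on `s'`, then `s'` itself would be a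
discrepancy. Indeed, for each `s ∈ Ω` either some symbol of `s'` has different multiplicities in
`σN` and `P s`, or the two projections onto `s'` are permutations of each other without being
equal; and two distinct lists that are permutations of each other already differ on their
projections to some pair of distinct symbols, which is then an order discrepancy inside `s'`. -/

open Classical in
theorem proj_eq_filter {A : Type*} (s : Set A) (l : List A) :
    proj s l = l.filter (· ∈ s) := by
  induction l with
  | nil => rfl
  | cons a l ih => by_cases ha : a ∈ s <;> simp [proj, ha, ih]

theorem mem_of_mem_proj {A : Type*} {s : Set A} {a : A} {l : List A}
    (h : a ∈ proj s l) : a ∈ s := by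
  classical
  rw [proj_eq_filter] at h
  simpa using (List.mem_filter.1 h).2

theorem count_proj_of_mem {A : Type*} [DecidableEq A] {s : Set A} {a : A} (ha : a ∈ s)
    (l : List A) : (proj s l).count a = l.count a := by
  classical
  rw [proj_eq_filter]
  exact List.count_filter (by simpa using ha)

theorem count_proj_of_not_mem {A : Type*} [DecidableEq A] {s : Set A} {a : A} (ha : a ∉ s)
    (l : List A) : (proj s l).count a = 0 :=
  List.count_eq_zero_of_not_mem fun h => ha (mem_of_mem_proj h)

theorem proj_proj {A : Type*} (s t : Set A) (l : List A) :
    proj t (proj s l) = proj (s ∩ t) l := by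
  classical
  simp only [proj_eq_filter, List.filter_filter, Set.mem_inter_iff, Bool.decide_and, Bool.and_comm]

theorem proj_pair_proj {A : Type*} {s : Set A} {a b : A} (ha : a ∈ s) (hb : b ∈ s)
    (l : List A) : proj {a, b} (proj s l) = proj {a, b} l := by
  rw [proj_proj, Set.inter_eq_right.2 (Set.insert_subset ha (Set.singleton_subset_iff.2 hb))]

theorem exists_proj_pair_ne_of_perm {A : Type*} {u v : List A} (hp : u.Perm v) (hne : u ≠ v) :
    ∃ a ∈ u, ∃ b ∈ v, a ≠ b ∧ proj {a, b} u ≠ proj {a, b} v := by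
  classical
  induction u generalizing v with
  | nil => exact absurd hp.nil_eq hne
  | cons a u ih =>
    obtain _ | ⟨b, v⟩ := v
    · exact absurd hp.eq_nil hne
    by_cases hab : a = b
    · subst hab
      obtain ⟨c, hc, d, hd, hcd, hproj⟩ :=
        ih (List.perm_cons a |>.1 hp) fun h => hne (h ▸ rfl)
      refine ⟨c, .tail _ hc, d, .tail _ hd, hcd, fun h => hproj ?_⟩
      simp only [proj_eq_filter, List.filter_cons] at h ⊢
      split_ifs at h
      · exact List.cons_injective h
      · exact h
    · refine ⟨a, .head _, b, .head _, hab, fun h => hab ?_⟩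
      simpa [proj_eq_filter] using congrArg List.head? h

theorem exists_multDisc_or_ordDisc_of_proj_ne {A : Type*} [DecidableEq A] {t : Set A}
    {x y : List A} (h : proj t x ≠ proj t y) :
    (∃ a ∈ t, a ∈ MultDisc x y) ∨ ∃ a b, a ∈ t ∧ b ∈ t ∧ OrdDisc x y a b := by
  by_cases hmult : ∃ a ∈ t, a ∈ MultDisc x y
  · exact .inl hmult
  right
  have hcount : ∀ a ∈ t, x.count a = y.count a := by simpa [MultDisc] using hmult
  have hperm : (proj t x).Perm (proj t y) := List.perm_iff_count.2 fun a => by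
    by_cases ha : a ∈ t
    · rw [count_proj_of_mem ha, count_proj_of_mem ha, hcount a ha]
    · rw [count_proj_of_not_mem ha, count_proj_of_not_mem ha]
  obtain ⟨a, ha, b, hb, hab, hpair⟩ := exists_proj_pair_ne_of_perm hperm h
  replace ha := mem_of_mem_proj ha
  replace hb := mem_of_mem_proj hb
  refine ⟨a, b, ha, hb, hab, hcount a ha, hcount b hb, ?_⟩
  rwa [proj_pair_proj ha hb, proj_pair_proj ha hb] at hpair

theorem no_discrepancy_keeps_ced_general {A : Type*} [DecidableEq A]
    (Ω Ω' : Set (Set A)) (σN : List A) (P : Set A → List A)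
    (hnd : ∀ δ : Set A, IsDisc Ω σN P δ → ∀ s' ∈ Ω', ¬ δ ⊆ s') :
    ∀ s' ∈ Ω', ∃ s ∈ Ω, proj s' σN = proj s' (P s) := by
  intro s' hs'
  by_contra! hne
  exact hnd s' (fun s hs => exists_multDisc_or_ordDisc_of_proj_ne (hne s hs)) s' hs' subset_rfl

/-- Conversely, if no discrepancy for `(σN, P)` is contained in any alphabet of a
distribution `Ω'`, then `(σN, P)` extends to a counter-example to `Ω' ⊨ Obs`:
every alphabet of `Ω'` admits a matching trace from the positive image of `P`. -/
theorem no_discrepancy_keeps_ced {A : Type*} [DecidableEq A]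
    (Ω Ω' : Set (Set A)) (hΩ' : AlphDistribution Ω')
    (Obs : List A → Option Bool) (σN : List A) (P : Set A → List A)
    (hce : IsCED Ω Obs σN P)
    (hnd : ∀ δ : Set A, IsDisc Ω σN P δ → ∀ s' ∈ Ω', ¬ δ ⊆ s') :
    ∀ s' ∈ Ω', ∃ s ∈ Ω, proj s' σN = proj s' (P s) :=
  no_discrepancy_keeps_ced_general Ω Ω' σN P hnd
end

section
/- If the Adapter constructs an interleaving σ_int of a local query σ over Σ_i with a known-positive trace σ' over ⋃_{j≠i} Σ_j agreeing with σ on the shared symbols, then σ ∈ proj(L(SUL), Σ_i) if and only if σ_int ∈ L(SUL), assuming L(SUL) is a product language over Ω and proj(σ', Σ_j) ∈ proj(L(SUL), Σ_j) for all j ≠ i. -/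
lemma proj_proj_of_subset {A : Type*} {s t : Set A} (h : s ⊆ t) (l : List A) :
    proj s (proj t l) = proj s l := by
  induction l with
  | nil => simp [proj]
  | cons a l ih =>
    by_cases ht : a ∈ t <;> by_cases hs : a ∈ s <;>
      simp [proj, ht, hs, ih]
    exact ht (h hs)

/-- Correctness of the Adapter's membership-query translation: an interleaving
`σint` of the local query `σ` over `Ω i` with a known-positive trace `σ'` over the
other alphabets, agreeing on shared symbols, is in the SUL's language iff `σ` is in
the projection of the SUL's language onto `Ω i`. -/
theorem adapter_member_correct {A : Type*} {n : ℕ} (Ω : Fin n → Set A)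
    (LS : Set (List A))
    (hprod : LS = {τ | ∀ k, proj (Ω k) τ ∈ proj (Ω k) '' LS})
    (i : Fin n) (σ σ' σint : List A)
    (hint1 : proj (Ω i) σint = σ)
    (hint2 : proj (⋃ j ∈ {j | j ≠ i}, Ω j) σint = σ')
    (hagree : proj (Ω i) σ' = proj (⋃ j ∈ {j | j ≠ i}, Ω j) σ)
    (hpos : ∀ j, j ≠ i → proj (Ω j) σ' ∈ proj (Ω j) '' LS) :
    σ ∈ proj (Ω i) '' LS ↔ σint ∈ LS := by
  constructor
  · intro hσ
    rw [hprod]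
    intro k
    by_cases hk : k = i
    · subst hk
      rw [hint1]
      exact hσ
    · have hsub : Ω k ⊆ ⋃ j ∈ {j | j ≠ i}, Ω j :=
        Set.subset_biUnion_of_mem (u := Ω) hk
      rw [← proj_proj_of_subset hsub σint, hint2]
      exact hpos k hk
  · intro h
    exact ⟨σint, h, hint1⟩
end
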